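/- arXiv:0910.3798 — 5 statements merged into one kernel-verified Lean document; each statement's English description precedes it below -/
import Mathlib

section
/- For any two vectors u, w in ℂ^d of norm 1 each supported on disjoint index sets Ω₀, Ω₁ of sizes d₀, d₁, and any unitary U of the paper's spectral form (a sum over common eigenvalues λ of rank-one projectors onto vectors y^{(a)}_λ = Σ_j β_{a,j} v_j^{(λ)} where each v_j^{(λ)} has all entries of modulus 1/√d_j on Ω_j and the β-matrix is unitary), the matrix element satisfies |⟨w|U|u⟩| ≤ |σ| / √(d₀ d₁), where σ is the set of eigenvalues common to both cycles. -/
/-!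
Expanding `U` in its spectral form, `⟨w|U|u⟩ = Σ_{λ ∈ σ} Σ_a c_λ^{(a)} y_λ^{(a)}(l₁) conj(y_λ^{(a)}(l₀))`.
Since `l₀ ∈ Ω₀` and `l₁ ∈ Ω₁` lie in disjoint supports, `y_λ^{(a)}(l₁) = β_{a,1} v₁(l₁)` and
`y_λ^{(a)}(l₀) = β_{a,0} v₀(l₀)`, so each eigenvalue contributes
`v₁(l₁) conj(v₀(l₀)) Σ_a c_a β_{a,1} conj(β_{a,0})`. By Cauchy–Schwarz and the column
normalization of `β` the inner sum has modulus at most `1`, and `|v₁(l₁) v₀(l₀)| = 1/√(d₀ d₁)`.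
-/

open Finset Matrix

lemma star_single_one_dotProduct_mulVec_single_one {m n α : Type*} [Fintype m] [Fintype n]
    [DecidableEq m] [DecidableEq n] [NonAssocSemiring α] [StarRing α]
    (M : Matrix m n α) (i : n) (j : m) :
    dotProduct (star (Pi.single j 1)) (M *ᵥ Pi.single i 1) = M j i := by
  rw [← Pi.single_star, star_one, mulVec_single_one, single_one_dotProduct]
  rfl

lemma norm_sum_mul_mul_star_le {ι 𝕜 : Type*} [RCLike 𝕜] (s : Finset ι) (c p q : ι → 𝕜)
    (hc : ∀ a ∈ s, ‖c a‖ ≤ 1) :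
    ‖∑ a ∈ s, c a * (p a * star (q a))‖ ≤
      √(∑ a ∈ s, ‖p a‖ ^ 2) * √(∑ a ∈ s, ‖q a‖ ^ 2) := by
  calc ‖∑ a ∈ s, c a * (p a * star (q a))‖
      ≤ ∑ a ∈ s, ‖p a‖ * ‖q a‖ := by
        refine norm_sum_le_of_le s fun a ha => ?_
        rw [norm_mul, norm_mul, norm_star]
        exact mul_le_of_le_one_left (by positivity) (hc a ha)
    _ ≤ _ := Real.sum_mul_le_sqrt_mul_sqrt s _ _

lemma norm_sum_mul_apply_mul_star_apply_le {ι n 𝕜 : Type*} [RCLike 𝕜] [Fintype ι]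
    (c : ι → 𝕜) (β : ι → Fin 2 → 𝕜) (v₀ v₁ : n → 𝕜) {i j : n} (hv₀ : v₀ j = 0) (hv₁ : v₁ i = 0)
    (hc : ∀ a, ‖c a‖ ≤ 1) (hβ : ∀ k, ∑ a, ‖β a k‖ ^ 2 = 1) :
    ‖∑ a, c a * ((β a 0 • v₀ + β a 1 • v₁) j * star ((β a 0 • v₀ + β a 1 • v₁) i))‖ ≤
      ‖v₁ j‖ * ‖v₀ i‖ := by
  have hfactor : ∑ a, c a * ((β a 0 • v₀ + β a 1 • v₁) j * star ((β a 0 • v₀ + β a 1 • v₁) i)) =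
      v₁ j * star (v₀ i) * ∑ a, c a * (β a 1 * star (β a 0)) := by
    simp only [Pi.add_apply, Pi.smul_apply, smul_eq_mul, hv₀, hv₁, mul_zero, zero_add, add_zero,
      star_mul', mul_sum]
    exact sum_congr rfl fun a _ => by ring
  have hcs := norm_sum_mul_mul_star_le univ c (β · 1) (β · 0) fun a _ => hc a
  rw [hβ 0, hβ 1, Real.sqrt_one, mul_one] at hcs
  rw [hfactor, norm_mul, norm_mul, norm_star]
  exact mul_le_of_le_one_right (by positivity) hcs

theorem stmt_7_general {d : ℕ}
    (Ω₀ Ω₁ : Finset (Fin d)) (hdisj : Disjoint Ω₀ Ω₁)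
    (d₀ d₁ : ℕ)
    (l₀ l₁ : Fin d) (hl₀ : l₀ ∈ Ω₀) (hl₁ : l₁ ∈ Ω₁)
    (u w : Fin d → ℂ) (hu : u = Pi.single l₀ 1) (hw : w = Pi.single l₁ 1)
    (σ : Finset ℂ) (η : ℂ → ℕ)
    (v : Fin 2 → ℂ → (Fin d → ℂ))
    (hv₀mod : ∀ lam ∈ σ, ∀ k ∈ Ω₀, ‖v 0 lam k‖ = 1 / Real.sqrt d₀)
    (hv₁mod : ∀ lam ∈ σ, ∀ k ∈ Ω₁, ‖v 1 lam k‖ = 1 / Real.sqrt d₁)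
    (hv₀supp : ∀ lam ∈ σ, ∀ k : Fin d, k ∉ Ω₀ → v 0 lam k = 0)
    (hv₁supp : ∀ lam ∈ σ, ∀ k : Fin d, k ∉ Ω₁ → v 1 lam k = 0)
    (β : (lam : ℂ) → Fin (η lam) → Fin 2 → ℂ)
    (hβ : ∀ lam ∈ σ, ∀ j : Fin 2, ∑ a : Fin (η lam), ‖β lam a j‖ ^ 2 = 1)
    (y : (lam : ℂ) → Fin (η lam) → (Fin d → ℂ))
    (hy : ∀ lam ∈ σ, ∀ a : Fin (η lam),
      y lam a = β lam a 0 • v 0 lam + β lam a 1 • v 1 lam)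
    (c : (lam : ℂ) → Fin (η lam) → ℂ)
    (hc : ∀ lam ∈ σ, ∀ a : Fin (η lam), ‖c lam a‖ = 1)
    (U : Matrix (Fin d) (Fin d) ℂ)
    (hU : U = ∑ lam ∈ σ, ∑ a : Fin (η lam),
      c lam a • Matrix.vecMulVec (y lam a) (star (y lam a))) :
    ‖dotProduct (star w) (U.mulVec u)‖ ≤
      (σ.card : ℝ) / Real.sqrt (d₀ * d₁) := by
  have hl₀₁ : l₀ ∉ Ω₁ := disjoint_left.mp hdisj hl₀
  have hl₁₀ : l₁ ∉ Ω₀ := disjoint_right.mp hdisj hl₁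
  have hentry : dotProduct (star w) (U *ᵥ u) =
      ∑ lam ∈ σ, ∑ a : Fin (η lam), c lam a * (y lam a l₁ * star (y lam a l₀)) := by
    simp only [hu, hw, hU, star_single_one_dotProduct_mulVec_single_one, Matrix.sum_apply,
      Matrix.smul_apply, vecMulVec_apply, Pi.star_apply, smul_eq_mul]
  have hterm : ∀ lam ∈ σ, ‖∑ a : Fin (η lam), c lam a * (y lam a l₁ * star (y lam a l₀))‖ ≤
      1 / Real.sqrt (d₀ * d₁) := by
    intro lam hlam
    rw [sum_congr rfl fun a _ => by rw [hy lam hlam a]]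
    refine (norm_sum_mul_apply_mul_star_apply_le _ _ _ _ (hv₀supp lam hlam l₁ hl₁₀)
      (hv₁supp lam hlam l₀ hl₀₁) (fun a => (hc lam hlam a).le) (hβ lam hlam)).trans_eq ?_
    rw [hv₁mod lam hlam l₁ hl₁, hv₀mod lam hlam l₀ hl₀, Real.sqrt_mul (Nat.cast_nonneg _)]
    field_simp
  calc ‖dotProduct (star w) (U *ᵥ u)‖
      ≤ ∑ _lam ∈ σ, 1 / Real.sqrt (d₀ * d₁) := hentry ▸ norm_sum_le_of_le σ hterm
    _ = σ.card / Real.sqrt (d₀ * d₁) := by rw [sum_const, nsmul_eq_mul, mul_one_div]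

/-- For basis vectors `u = |l₀⟩`, `w = |l₁⟩` supported on disjoint cycle index sets
`Ω₀, Ω₁` of sizes `d₀, d₁`, and a unitary `U` of the paper's spectral form
`U = Σ_{λ∈σ} Σ_a c_λ^{(a)} |y_λ^{(a)}⟩⟨y_λ^{(a)}|` with unimodular `c`'s
(`c_λ^{(a)} = e^{-iε_λ^{(a)} t}`), where `y_λ^{(a)} = Σ_j β_{a,j}^{(λ)} v_j^{(λ)}`, each
cycle eigenvector `v_j^{(λ)}` is supported on `Ω_j` with all entries of modulus `1/√d_j`
there, and the `β`-coefficients satisfy the column normalization `Σ_a |β_{a,j}^{(λ)}|² = 1`,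
the matrix element satisfies `|⟨w|U|u⟩| ≤ |σ| / √(d₀ d₁)`, where `σ` is the set of
eigenvalues common to both cycles. -/
theorem stmt_7 {d : ℕ}
    (Ω₀ Ω₁ : Finset (Fin d)) (hdisj : Disjoint Ω₀ Ω₁)
    (d₀ d₁ : ℕ) (hd₀ : Ω₀.card = d₀) (hd₁ : Ω₁.card = d₁)
    (hd₀pos : 0 < d₀) (hd₁pos : 0 < d₁)
    (l₀ l₁ : Fin d) (hl₀ : l₀ ∈ Ω₀) (hl₁ : l₁ ∈ Ω₁)
    (u w : Fin d → ℂ) (hu : u = Pi.single l₀ 1) (hw : w = Pi.single l₁ 1)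
    (σ : Finset ℂ) (η : ℂ → ℕ)
    (v : Fin 2 → ℂ → (Fin d → ℂ))
    (hv₀mod : ∀ lam ∈ σ, ∀ k ∈ Ω₀, ‖v 0 lam k‖ = 1 / Real.sqrt d₀)
    (hv₁mod : ∀ lam ∈ σ, ∀ k ∈ Ω₁, ‖v 1 lam k‖ = 1 / Real.sqrt d₁)
    (hv₀supp : ∀ lam ∈ σ, ∀ k : Fin d, k ∉ Ω₀ → v 0 lam k = 0)
    (hv₁supp : ∀ lam ∈ σ, ∀ k : Fin d, k ∉ Ω₁ → v 1 lam k = 0)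
    (β : (lam : ℂ) → Fin (η lam) → Fin 2 → ℂ)
    (hβ : ∀ lam ∈ σ, ∀ j : Fin 2, ∑ a : Fin (η lam), ‖β lam a j‖ ^ 2 = 1)
    (y : (lam : ℂ) → Fin (η lam) → (Fin d → ℂ))
    (hy : ∀ lam ∈ σ, ∀ a : Fin (η lam),
      y lam a = β lam a 0 • v 0 lam + β lam a 1 • v 1 lam)
    (hyortho : ∀ lam ∈ σ, ∀ lam' ∈ σ, ∀ (a : Fin (η lam)) (a' : Fin (η lam')),
      dotProduct (star (y lam a)) (y lam' a') =
        if lam = lam' ∧ (a : ℕ) = (a' : ℕ) then 1 else 0)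
    (c : (lam : ℂ) → Fin (η lam) → ℂ)
    (hc : ∀ lam ∈ σ, ∀ a : Fin (η lam), ‖c lam a‖ = 1)
    (U : Matrix (Fin d) (Fin d) ℂ)
    (hU : U = ∑ lam ∈ σ, ∑ a : Fin (η lam),
      c lam a • Matrix.vecMulVec (y lam a) (star (y lam a))) :
    ‖dotProduct (star w) (U.mulVec u)‖ ≤
      (σ.card : ℝ) / Real.sqrt (d₀ * d₁) :=
  stmt_7_general Ω₀ Ω₁ hdisj d₀ d₁ l₀ l₁ hl₀ hl₁ u w hu hw σ η v hv₀mod hv₁mod hv₀supp hv₁supp β hβ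
    y hy c hc U hU
end

section
/- Let Π be a permutation matrix on ℂ^d with disjoint cycles Π₀ and Π₁ of equal length d₀ = d₁ and supports Ω₀ ∋ l₀ and Ω₁ ∋ l₁. Suppose U₁ is a unitary on ℂ^d commuting with Π and satisfying U₁|l₀⟩ = e^{iφ}|l₁⟩ for some real φ. Then U₁ maps the span of {|k⟩ : k ∈ Ω₀} bijectively onto the span of {|k⟩ : k ∈ Ω₁}; in fact U₁ = e^{iφ} Σ_{j=0}^{d₀-1} Π₁^j |l₁⟩⟨l₀| (Π₀†)^j + W where W annihilates all basis vectors indexed by Ω₀ and W† annihilates all basis vectors indexed by Ω₁. -/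
/-!
Commuting with the permutation matrix propagates `U₁|l₀⟩ = e^{iφ}|l₁⟩` along the two cycles:
`U₁|π^m l₀⟩ = e^{iφ}|π^m l₁⟩` for every `m`. As both cycles have length `d₀`, the points
`π^j l₀` (resp. `π^j l₁`), `j < d₀`, enumerate `Ω₀` (resp. `Ω₁`) without repetition, so the
rank-one sum agrees with `U₁` on the basis vectors of `Ω₀`. Unitarity turns these column
relations into the row relations `U₁†|π^m l₁⟩ = e^{-iφ}|π^m l₀⟩`, which give the claim on `W†`.
-/

open Matrix Finset Function

namespace Equiv.Perm

variable {α : Type*} [Finite α] {π : Perm α} {x : α} {Ω : Finset α}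

theorem eq_image_range_minimalPeriod_of_mem_iff [DecidableEq α] (hΩ : ∀ k, k ∈ Ω ↔ ∃ m : ℕ, (π ^ m) x = k) :
    Ω = (range (minimalPeriod π x)).image fun j => (π ^ j) x := by
  ext k
  rw [hΩ, mem_image]
  constructor
  · rintro ⟨m, rfl⟩
    refine ⟨m % minimalPeriod π x, mem_range.2 ?_, iterate_mod_minimalPeriod_eq⟩
    exact Nat.mod_lt _ (minimalPeriod_pos_of_mem_periodicPts (π.injective.mem_periodicPts x))
  · rintro ⟨m, -, rfl⟩
    exact ⟨m, rfl⟩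

theorem card_eq_minimalPeriod_of_mem_iff (hΩ : ∀ k, k ∈ Ω ↔ ∃ m : ℕ, (π ^ m) x = k) :
    Ω.card = minimalPeriod π x := by
  classical
  rw [eq_image_range_minimalPeriod_of_mem_iff hΩ, card_image_of_injOn, card_range]
  rw [coe_range]
  exact iterate_injOn_Iio_minimalPeriod

theorem image_range_card_of_mem_iff [DecidableEq α] (hΩ : ∀ k, k ∈ Ω ↔ ∃ m : ℕ, (π ^ m) x = k) :
    (range Ω.card).image (fun j => (π ^ j) x) = Ω := by
  rw [card_eq_minimalPeriod_of_mem_iff hΩ]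
  exact (eq_image_range_minimalPeriod_of_mem_iff hΩ).symm

theorem injOn_range_card_of_mem_iff (hΩ : ∀ k, k ∈ Ω ↔ ∃ m : ℕ, (π ^ m) x = k) :
    Set.InjOn (fun j => (π ^ j) x) (range Ω.card) := by
  rw [card_eq_minimalPeriod_of_mem_iff hΩ, coe_range]
  exact iterate_injOn_Iio_minimalPeriod

end Equiv.Perm

namespace Matrix

variable {ι R : Type*} [Fintype ι] [DecidableEq ι]

theorem mulVec_single_one_of_apply_eq_ite [NonAssocSemiring R] {π : Equiv.Perm ι}
    {P : Matrix ι ι R} (hP : ∀ i j, P i j = if i = π j then 1 else 0) (j : ι) :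
    P *ᵥ Pi.single j 1 = Pi.single (π j) 1 := by
  ext i
  rw [mulVec_single_one, col_apply, hP, Pi.single_apply]

theorem sum_vecMulVec_single_mulVec_single [NonAssocSemiring R] {κ : Type*} {s : Finset κ}
    (f g : κ → ι) (hg : Set.InjOn g s) {m : κ} (hm : m ∈ s) :
    (∑ j ∈ s, vecMulVec (Pi.single (f j) (1 : R)) (Pi.single (g j) 1)) *ᵥ Pi.single (g m) 1 =
      Pi.single (f m) 1 := by
  rw [sum_mulVec, sum_eq_single m]
  · ext i; simp [vecMulVec_apply]
  · intro j hj hjm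
    ext i
    simp [vecMulVec_apply, Pi.single_apply, hg.ne hj hm hjm]
  · exact fun h => absurd hm h

section CommSemiring

variable [CommSemiring R]

theorem mulVec_single_pow_of_commute {π : Equiv.Perm ι} {P U : Matrix ι ι R}
    (hP : ∀ i j, P i j = if i = π j then 1 else 0) (hcomm : U * P = P * U) {c : R} {x y : ι}
    (h : U *ᵥ Pi.single x 1 = c • Pi.single y 1) (m : ℕ) :
    U *ᵥ Pi.single ((π ^ m) x) 1 = c • Pi.single ((π ^ m) y) 1 := by
  induction m with
  | zero => simpa using h
  | succ m ih =>
    simp only [pow_succ', Equiv.Perm.mul_apply, ← mulVec_single_one_of_apply_eq_ite hP]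
    rw [mulVec_mulVec, hcomm, ← mulVec_mulVec, ih, mulVec_smul]

theorem map_mulVecLin_span_range_single {κ : Type*} {U : Matrix ι ι R} {c : R} (hc : IsUnit c)
    {f g : κ → ι} (h : ∀ m, U *ᵥ Pi.single (f m) 1 = c • Pi.single (g m) 1) :
    (Submodule.span R (Set.range fun m => Pi.single (f m) (1 : R))).map U.mulVecLin =
      Submodule.span R (Set.range fun m => Pi.single (g m) (1 : R)) := by
  rw [Submodule.map_span, ← Set.range_comp]
  simp only [Function.comp_def, mulVecLin_apply, h]
  rw [Set.range_smul, Submodule.span_smul_eq_of_isUnit _ _ hc]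

end CommSemiring

section Unitary

variable [CommRing R] [StarRing R] {U : Matrix ι ι R} {c : R}

theorem conjTranspose_mulVec_of_mulVec_eq_smul (hU : U ∈ unitaryGroup ι R) (hc : star c * c = 1)
    {v w : ι → R} (h : U *ᵥ v = c • w) : Uᴴ *ᵥ w = star c • v :=
  calc Uᴴ *ᵥ w = Uᴴ *ᵥ ((star c * c) • w) := by rw [hc, one_smul]
    _ = star c • ((star U * U) *ᵥ v) := by
      rw [mul_smul, ← h, mulVec_smul, mulVec_mulVec, star_eq_conjTranspose]
    _ = star c • v := by rw [Unitary.star_mul_self_of_mem hU, one_mulVec]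

theorem exists_eq_smul_sum_vecMulVec_single_add (hU : U ∈ unitaryGroup ι R) (hc : star c * c = 1)
    {κ : Type*} {s : Finset κ} {f g : κ → ι} (hf : Set.InjOn f s) (hg : Set.InjOn g s)
    (h : ∀ m ∈ s, U *ᵥ Pi.single (f m) 1 = c • Pi.single (g m) 1) :
    ∃ W : Matrix ι ι R,
      U = c • ∑ j ∈ s, vecMulVec (Pi.single (g j) (1 : R)) (Pi.single (f j) 1) + W ∧
      (∀ m ∈ s, W *ᵥ Pi.single (f m) 1 = 0) ∧ (∀ m ∈ s, Wᴴ *ᵥ Pi.single (g m) 1 = 0) := by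
  refine ⟨U - c • ∑ j ∈ s, vecMulVec (Pi.single (g j) 1) (Pi.single (f j) 1),
    (add_sub_cancel _ _).symm, fun m hm => ?_, fun m hm => ?_⟩
  · rw [sub_mulVec, smul_mulVec, sum_vecMulVec_single_mulVec_single g f hf hm, h m hm,
      sub_self]
  · have hS : (∑ j ∈ s, vecMulVec (Pi.single (g j) (1 : R)) (Pi.single (f j) 1))ᴴ =
        ∑ j ∈ s, vecMulVec (Pi.single (f j) (1 : R)) (Pi.single (g j) 1) := by
      simp only [conjTranspose_sum, conjTranspose_vecMulVec, ← Pi.single_star, star_one]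
    rw [conjTranspose_sub, conjTranspose_smul, hS, sub_mulVec, smul_mulVec,
      sum_vecMulVec_single_mulVec_single f g hg hm,
      conjTranspose_mulVec_of_mulVec_eq_smul hU hc (h m hm), sub_self]

end Unitary

end Matrix

theorem stmt_8_general {d : ℕ}
    (π : Equiv.Perm (Fin d)) (P : Matrix (Fin d) (Fin d) ℂ)
    (hP : ∀ i j : Fin d, P i j = if i = π j then 1 else 0)
    (Ω₀ Ω₁ : Finset (Fin d))
    (d₀ : ℕ) (hd₀ : Ω₀.card = d₀) (hd₁ : Ω₁.card = d₀)
    (l₀ l₁ : Fin d)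
    (hcyc₀ : ∀ k, k ∈ Ω₀ ↔ ∃ m : ℕ, (π ^ m) l₀ = k)
    (hcyc₁ : ∀ k, k ∈ Ω₁ ↔ ∃ m : ℕ, (π ^ m) l₁ = k)
    (U₁ : Matrix (Fin d) (Fin d) ℂ)
    (hU₁ : U₁ ∈ Matrix.unitaryGroup (Fin d) ℂ)
    (hcomm : U₁ * P = P * U₁)
    (φ : ℝ)
    (htransfer : U₁.mulVec (Pi.single l₀ 1) =
      Complex.exp (Complex.I * φ) • (Pi.single l₁ 1 : Fin d → ℂ)) :
    (Submodule.map U₁.mulVecLin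
        (Submodule.span ℂ ((fun k => Pi.single k (1 : ℂ)) '' (Ω₀ : Set (Fin d)))) =
      Submodule.span ℂ ((fun k => Pi.single k (1 : ℂ)) '' (Ω₁ : Set (Fin d)))) ∧
    ∃ W : Matrix (Fin d) (Fin d) ℂ,
      U₁ = Complex.exp (Complex.I * φ) •
          (∑ j ∈ Finset.range d₀,
            Matrix.vecMulVec (Pi.single ((π ^ j) l₁) (1 : ℂ))
              (Pi.single ((π ^ j) l₀) (1 : ℂ))) + W ∧
      (∀ k ∈ Ω₀, W.mulVec (Pi.single k 1) = 0) ∧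
      (∀ k ∈ Ω₁, W.conjTranspose.mulVec (Pi.single k 1) = 0) := by
  have hc : star (Complex.exp (Complex.I * φ)) * Complex.exp (Complex.I * φ) = 1 := by
    rw [Complex.star_def, Complex.conj_mul', Complex.norm_exp_I_mul_ofReal, Complex.ofReal_one,
      one_pow]
  have hU_orbit := mulVec_single_pow_of_commute hP hcomm htransfer
  refine ⟨?_, ?_⟩
  · have hΩ₀ : (Ω₀ : Set (Fin d)) = Set.range fun m : ℕ => (π ^ m) l₀ := Set.ext hcyc₀
    have hΩ₁ : (Ω₁ : Set (Fin d)) = Set.range fun m : ℕ => (π ^ m) l₁ := Set.ext hcyc₁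
    rw [hΩ₀, hΩ₁, ← Set.range_comp, ← Set.range_comp]
    exact map_mulVecLin_span_range_single (Complex.exp_ne_zero _).isUnit hU_orbit
  · have hinj₀ : Set.InjOn (fun m => (π ^ m) l₀) (range d₀) :=
      hd₀ ▸ Equiv.Perm.injOn_range_card_of_mem_iff hcyc₀
    have hinj₁ : Set.InjOn (fun m => (π ^ m) l₁) (range d₀) :=
      hd₁ ▸ Equiv.Perm.injOn_range_card_of_mem_iff hcyc₁
    obtain ⟨W, hUW, hW, hWH⟩ :=
      exists_eq_smul_sum_vecMulVec_single_add hU₁ hc hinj₀ hinj₁ fun m _ => hU_orbit m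
    refine ⟨W, hUW, ?_, ?_⟩
    · rw [← Equiv.Perm.image_range_card_of_mem_iff hcyc₀, hd₀, forall_mem_image]
      exact hW
    · rw [← Equiv.Perm.image_range_card_of_mem_iff hcyc₁, hd₁, forall_mem_image]
      exact hWH

/-- Let `P` be a permutation matrix on `ℂ^d` whose permutation `π` has two disjoint cycles of
equal length `d₀ = d₁` with supports `Ω₀ ∋ l₀` and `Ω₁ ∋ l₁`. If a unitary `U₁` commutes with
`P` and satisfies `U₁|l₀⟩ = e^{iφ}|l₁⟩`, then `U₁` maps the span of the basis vectors indexed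
by `Ω₀` bijectively onto the span of those indexed by `Ω₁`; in fact
`U₁ = e^{iφ} Σ_{j<d₀} |π^j l₁⟩⟨π^j l₀| + W` where `W` annihilates all basis vectors indexed
by `Ω₀` and `W†` annihilates all basis vectors indexed by `Ω₁`. -/
theorem stmt_8 {d : ℕ}
    (π : Equiv.Perm (Fin d)) (P : Matrix (Fin d) (Fin d) ℂ)
    (hP : ∀ i j : Fin d, P i j = if i = π j then 1 else 0)
    (Ω₀ Ω₁ : Finset (Fin d)) (hdisj : Disjoint Ω₀ Ω₁)
    (d₀ : ℕ) (hd₀ : Ω₀.card = d₀) (hd₁ : Ω₁.card = d₀) (hd₀pos : 0 < d₀)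
    (l₀ l₁ : Fin d) (hl₀ : l₀ ∈ Ω₀) (hl₁ : l₁ ∈ Ω₁)
    (hcyc₀ : ∀ k, k ∈ Ω₀ ↔ ∃ m : ℕ, (π ^ m) l₀ = k)
    (hcyc₁ : ∀ k, k ∈ Ω₁ ↔ ∃ m : ℕ, (π ^ m) l₁ = k)
    (U₁ : Matrix (Fin d) (Fin d) ℂ)
    (hU₁ : U₁ ∈ Matrix.unitaryGroup (Fin d) ℂ)
    (hcomm : U₁ * P = P * U₁)
    (φ : ℝ)
    (htransfer : U₁.mulVec (Pi.single l₀ 1) =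
      Complex.exp (Complex.I * φ) • (Pi.single l₁ 1 : Fin d → ℂ)) :
    (Submodule.map U₁.mulVecLin
        (Submodule.span ℂ ((fun k => Pi.single k (1 : ℂ)) '' (Ω₀ : Set (Fin d)))) =
      Submodule.span ℂ ((fun k => Pi.single k (1 : ℂ)) '' (Ω₁ : Set (Fin d)))) ∧
    ∃ W : Matrix (Fin d) (Fin d) ℂ,
      U₁ = Complex.exp (Complex.I * φ) •
          (∑ j ∈ Finset.range d₀,
            Matrix.vecMulVec (Pi.single ((π ^ j) l₁) (1 : ℂ))
              (Pi.single ((π ^ j) l₀) (1 : ℂ))) + W ∧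
      (∀ k ∈ Ω₀, W.mulVec (Pi.single k 1) = 0) ∧
      (∀ k ∈ Ω₁, W.conjTranspose.mulVec (Pi.single k 1) = 0) :=
  stmt_8_general π P hP Ω₀ Ω₁ d₀ hd₀ hd₁ l₀ l₁ hcyc₀ hcyc₁ U₁ hU₁ hcomm φ htransfer
end

section
/- With the universal-bus Hamiltonian H = (1/τ) Σ_n ε_n |v_n⟩⟨v_n| on ℂ^d, where ε_n = -2πn/d + 2πx_n and x_n = c + n + (d-1)f(n) for some constant c ∈ ℤ and arbitrary function f : {0,...,d-1} → ℤ, the evolution U(t) = exp(-iHt) satisfies |⟨m|U(τ_m)|0⟩| = 1 for every m ∈ {1,...,d-1}, where τ_m = mτ/(d-1). That is, the excitation is perfectly transferred from node 0 to node m at time τ_m. -/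
/-!
In the Fourier basis the transfer amplitude is `⟨m|U(t)|0⟩ = (1/d) Σ_n e^{-iε_n t/τ} e^{2πi nm/d}`.
At `t = τ_m = mτ/(d-1)` the two phases of the `n`-th term combine to
`-2πi m c/(d-1) - 2πi m f(n)`, because the `n`-dependent parts
`2πi nm/(d(d-1)) - 2πi nm/(d-1) + 2πi nm/d` sum to zero, and `2πi m f(n)` is a
multiple of `2πi`. So all `d` terms equal the same unit complex number divided by `d`, and the
amplitude is a unit complex number.
-/

open Complex Matrix

theorem Matrix.star_single_dotProduct_mulVec_single {n R : Type*} [Fintype n] [DecidableEq n]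
    [NonAssocSemiring R] [StarRing R] (M : Matrix n n R) (i j : n) :
    star (Pi.single i (1 : R)) ⬝ᵥ (M *ᵥ Pi.single j 1) = M i j := by
  rw [Pi.star_single, star_one, single_one_dotProduct, mulVec_single_one]
  rfl

theorem Matrix.sum_smul_vecMulVec_star_apply {ι n R : Type*} [Fintype ι] [Semiring R]
    [StarRing R] (a : ι → R) (v : ι → n → R) (i j : n) :
    (∑ k, a k • vecMulVec (v k) (star (v k))) i j = ∑ k, a k * (v k i * star (v k j)) := by
  simp [Matrix.sum_apply, vecMulVec_apply]

theorem fourier_mul_star_fourier_zero {d : ℕ} [NeZero d] (v : Fin d → (Fin d → ℂ))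
    (hv : ∀ n k : Fin d,
      v n k = (1 / Real.sqrt d : ℝ) *
        Complex.exp (2 * Real.pi * Complex.I * (n.val : ℂ) * (k.val : ℂ) / (d : ℂ)))
    (n m : Fin d) :
    v n m * star (v n 0) = (1 / d : ℂ) * exp (2 * Real.pi * I * n.val * m.val / d) := by
  have hsqrt : ((1 / Real.sqrt d : ℝ) : ℂ) * ((1 / Real.sqrt d : ℝ) : ℂ) = 1 / d := by
    rw [← ofReal_mul, one_div_mul_one_div, Real.mul_self_sqrt d.cast_nonneg]
    push_cast
    ring
  rw [hv, hv, ← hsqrt]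
  simp only [Fin.val_zero, CharP.cast_eq_zero, mul_zero, zero_div, exp_zero, mul_one,
    Complex.star_def, conj_ofReal]
  ring

theorem exp_busPhase_mul_exp_fourier {d : ℕ} [NeZero d] (hd : (d : ℝ) - 1 ≠ 0) {τ : ℝ}
    (hτ : τ ≠ 0) (c f : ℤ) (n m : ℕ) (ε : ℝ)
    (hε : ε = -(2 * Real.pi * n / d) + 2 * Real.pi * (c + n + ((d : ℝ) - 1) * f)) :
    exp (-(I * ε * ((m * τ / ((d : ℝ) - 1) : ℝ) : ℂ) / τ)) * exp (2 * Real.pi * I * n * m / d) =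
      exp ((-(2 * Real.pi * m * c / ((d : ℝ) - 1)) : ℝ) * I) := by
  have hd1 : (d : ℂ) - 1 ≠ 0 := by exact_mod_cast hd
  have hτ' : (τ : ℂ) ≠ 0 := ofReal_ne_zero.2 hτ
  have hd0 : (d : ℂ) ≠ 0 := Nat.cast_ne_zero.2 (NeZero.ne d)
  have hexponent : -(I * ε * ((m * τ / ((d : ℝ) - 1) : ℝ) : ℂ) / τ) +
      2 * Real.pi * I * n * m / d =
      (-(2 * Real.pi * m * c / ((d : ℝ) - 1)) : ℝ) * I + (-(m * f) : ℤ) * (2 * Real.pi * I) := by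
    subst hε
    push_cast
    field_simp
    ring
  rw [← exp_add, hexponent, exp_add, exp_int_mul_two_pi_mul_I, mul_one]

theorem stmt_11_general {d : ℕ} [NeZero d]
    (τ : ℝ) (hτ : 0 < τ) (c : ℤ) (f : Fin d → ℤ)
    (v : Fin d → (Fin d → ℂ))
    (hv : ∀ n k : Fin d,
      v n k = (1 / Real.sqrt d : ℝ) *
        Complex.exp (2 * Real.pi * Complex.I * (n.val : ℂ) * (k.val : ℂ) / (d : ℂ)))
    (ε : Fin d → ℝ)
    (hε : ∀ n : Fin d, ε n =
      -(2 * Real.pi * (n.val : ℝ) / d) +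
        2 * Real.pi * ((c : ℝ) + (n.val : ℝ) + ((d : ℝ) - 1) * (f n : ℝ)))
    (U : ℝ → Matrix (Fin d) (Fin d) ℂ)
    (hU : ∀ t : ℝ, U t = ∑ n : Fin d,
      Complex.exp (-(Complex.I * ((ε n : ℂ)) * (t : ℂ) / (τ : ℂ))) •
        Matrix.vecMulVec (v n) (star (v n))) :
    ∀ m : Fin d, m ≠ 0 →
      ‖(dotProduct (star (Pi.single m (1 : ℂ)))
        ((U ((m.val : ℝ) * τ / ((d : ℝ) - 1))).mulVec (Pi.single 0 1)))‖ = 1 := by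
  intro m hm
  have hd : (d : ℝ) - 1 ≠ 0 := by
    have : 1 < d := lt_of_le_of_lt (Fin.pos_iff_ne_zero.2 hm) m.isLt
    exact sub_ne_zero.2 (by exact_mod_cast this.ne')
  set θ : ℝ := -(2 * Real.pi * m.val * c / ((d : ℝ) - 1))
  have hterm : ∀ n : Fin d,
      exp (-(I * ε n * ((m.val * τ / ((d : ℝ) - 1) : ℝ) : ℂ) / τ)) *
        (v n m * star (v n 0)) = (1 / d : ℂ) * exp (θ * I) := fun n => by
    rw [fourier_mul_star_fourier_zero v hv, mul_left_comm,
      exp_busPhase_mul_exp_fourier hd hτ.ne' c (f n) n m (ε n) (hε n)]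
  have hd0 : (d : ℂ) ≠ 0 := Nat.cast_ne_zero.2 (NeZero.ne d)
  rw [hU, star_single_dotProduct_mulVec_single, sum_smul_vecMulVec_star_apply,
    Finset.sum_congr rfl fun n _ => hterm n, Finset.sum_const, Finset.card_univ,
    Fintype.card_fin, nsmul_eq_mul, ← mul_assoc, mul_one_div_cancel hd0, one_mul,
    norm_exp_ofReal_mul_I]

/-- For the universal-bus Hamiltonian `H = (1/τ) Σ_n ε_n |v_n⟩⟨v_n|` on `ℂ^d`, with
`ε_n = -2πn/d + 2π x_n` and `x_n = c + n + (d-1) f(n)` (`c ∈ ℤ`, `f : Fin d → ℤ`), the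
evolution `U(t) = Σ_n e^{-iε_n t/τ}|v_n⟩⟨v_n|` satisfies `|⟨m|U(τ_m)|0⟩| = 1` for every
`m ∈ {1,…,d-1}`, where `τ_m = mτ/(d-1)`: the excitation is perfectly transferred from node
`0` to node `m` at time `τ_m`. -/
theorem stmt_11 {d : ℕ} [NeZero d] (hd : 2 ≤ d)
    (τ : ℝ) (hτ : 0 < τ) (c : ℤ) (f : Fin d → ℤ)
    (v : Fin d → (Fin d → ℂ))
    (hv : ∀ n k : Fin d,
      v n k = (1 / Real.sqrt d : ℝ) *
        Complex.exp (2 * Real.pi * Complex.I * (n.val : ℂ) * (k.val : ℂ) / (d : ℂ)))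
    (ε : Fin d → ℝ)
    (hε : ∀ n : Fin d, ε n =
      -(2 * Real.pi * (n.val : ℝ) / d) +
        2 * Real.pi * ((c : ℝ) + (n.val : ℝ) + ((d : ℝ) - 1) * (f n : ℝ)))
    (U : ℝ → Matrix (Fin d) (Fin d) ℂ)
    (hU : ∀ t : ℝ, U t = ∑ n : Fin d,
      Complex.exp (-(Complex.I * ((ε n : ℂ)) * (t : ℂ) / (τ : ℂ))) •
        Matrix.vecMulVec (v n) (star (v n))) :
    ∀ m : Fin d, m ≠ 0 →
      ‖(dotProduct (star (Pi.single m (1 : ℂ)))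
        ((U ((m.val : ℝ) * τ / ((d : ℝ) - 1))).mulVec (Pi.single 0 1)))‖ = 1 :=
  stmt_11_general τ hτ c f v hv ε hε U hU
end

section
/- In the five-node network with Π having 3-cycle {0,2,4} and 2-cycle {1,3}, with |α| ∈ {0,1} (so x₀^{(1)} may be taken equal to x₀^{(2)}), the choice x_{2πν/3}^{(1)} = c + ν + 2f(ν) for ν ∈ {0,1,2}, c ∈ ℤ, f : {0,1,2} → ℤ, yields |⟨2|U(τ/2)|0⟩| = 1: the excitation is perfectly transferred from node 0 to node 2 at time τ/2 (and to node 4 at time τ). -/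
/-!
In the eigenbasis of `U`, the amplitude `⟨2j|U(jτ/2)|0⟩` (`j = 1, 2`) is a sum of phases weighted by
the overlaps of the eigenvectors with the nodes `0` and `2j`: the two eigenvectors of eigenphase `0`
(equal energies since `x₀⁽¹⁾ = x₀⁽²⁾`) carry the weight `(|α|² + |β|²)/3`, the Fourier mode `ν` of
the 3-cycle carries `e^{2πiνj/3}/3`, and `v_{1,π}` vanishes at node `0`. With
`x_{2πν/3} = c + ν + 2f(ν)`, every phase times its Fourier factor equals `(-1)^{jc}`, so the
amplitude is `(-1)^{jc}`.
-/

open Complex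
open scoped Real

theorem cexp_eq_neg_one_zpow {z : ℂ} (n m : ℤ) (h : z = (n + 2 * m) * (π * I)) :
    cexp z = (-1) ^ n := by
  have hz : z = n * (π * I) + m * (2 * π * I) := by rw [h]; ring
  rw [hz, exp_add, exp_int_mul, exp_pi_mul_I, exp_int_mul_two_pi_mul_I, mul_one]

-- The left side is `⟨2j|U(t)|0⟩` expanded in the eigenbasis, in the shape `simp` gives it, with
-- `r = 1/√3` and the Fourier factors `ω₁`, `ω₂` of the 3-cycle modes at node `2j`.
theorem transfer_amplitude_eq_neg_one_zpow (α β : ℂ) (hαβ : ‖α‖ ^ 2 + ‖β‖ ^ 2 = 1)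
    (c : ℤ) (f : Fin 3 → ℤ) (j : ℤ) (r t τ ω₁ ω₂ : ℂ) (hr : r * r = 1 / 3) (ht : t / τ = j / 2)
    (hω₁ : ω₁ = cexp (2 * π * I * j / 3)) (hω₂ : ω₂ = cexp (4 * π * I * j / 3)) :
    cexp (-(I * (2 * π * (c + 2 * f 0)) * t / τ)) * (α * r * ((starRingEnd ℂ) α * r)) +
        cexp (-(I * (2 * π * (c + 2 * f 0)) * t / τ)) *
          ((starRingEnd ℂ) β * r * (β * r)) +
      cexp (-(I * (-(2 * π / 3) + 2 * π * (c + 1 + 2 * f 1)) * t / τ)) *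
          (r * ω₁ * r) +
      cexp (-(I * (-(4 * π / 3) + 2 * π * (c + 2 + 2 * f 2)) * t / τ)) *
          (r * ω₂ * r) =
    (-1) ^ (j * c) := by
  have hnorm : α * (starRingEnd ℂ) α + (starRingEnd ℂ) β * β = 1 := by
    rw [mul_conj', conj_mul']
    exact_mod_cast hαβ
  have h₀ : cexp (-(I * (2 * π * (c + 2 * f 0)) * t / τ)) = (-1) ^ (j * c) :=
    cexp_eq_neg_one_zpow _ (-(j * c) - j * f 0) (by rw [mul_div_assoc, ht]; push_cast; ring)
  have h₁ : cexp (-(I * (-(2 * π / 3) + 2 * π * (c + 1 + 2 * f 1)) * t / τ)) * ω₁ =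
      (-1) ^ (j * c) := by
    rw [hω₁, ← exp_add]
    exact cexp_eq_neg_one_zpow _ (-(j * c) - j * f 1)
      (by rw [mul_div_assoc, ht]; push_cast; ring)
  have h₂ : cexp (-(I * (-(4 * π / 3) + 2 * π * (c + 2 + 2 * f 2)) * t / τ)) * ω₂ =
      (-1) ^ (j * c) := by
    rw [hω₂, ← exp_add]
    exact cexp_eq_neg_one_zpow _ (-(j * c) - j * f 2)
      (by rw [mul_div_assoc, ht]; push_cast; ring)
  linear_combination (r * r) * ((α * (starRingEnd ℂ) α + (starRingEnd ℂ) β * β) * h₀ + h₁ + h₂ +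
    (-1) ^ (j * c) * hnorm) + 3 * (-1) ^ (j * c) * hr

theorem stmt_16_general
    (e : Fin 5 → (Fin 5 → ℂ)) (he : ∀ k, e k = Pi.single k 1)
    (α β : ℂ) (hαβ : ‖α‖ ^ 2 + ‖β‖ ^ 2 = 1)
    (v00 v10 v1pi v0a v0b : Fin 5 → ℂ)
    (hv00 : v00 = ((1 / Real.sqrt 3 : ℝ) : ℂ) • (e 0 + e 2 + e 4))
    (hv10 : v10 = ((1 / Real.sqrt 2 : ℝ) : ℂ) • (e 1 + e 3))
    (hv1pi : v1pi = ((1 / Real.sqrt 2 : ℝ) : ℂ) • (e 1 - e 3))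
    (hv0a : v0a = ((1 / Real.sqrt 3 : ℝ) : ℂ) •
      (e 0 + Complex.exp (2 * Real.pi * Complex.I / 3) • e 2 +
        Complex.exp (4 * Real.pi * Complex.I / 3) • e 4))
    (hv0b : v0b = ((1 / Real.sqrt 3 : ℝ) : ℂ) •
      (e 0 + Complex.exp (4 * Real.pi * Complex.I / 3) • e 2 +
        Complex.exp (8 * Real.pi * Complex.I / 3) • e 4))
    (y : Fin 5 → (Fin 5 → ℂ))
    (hy : y = ![α • v00 + β • v10, (starRingEnd ℂ β) • v00 - (starRingEnd ℂ α) • v10,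
      v1pi, v0a, v0b])
    (c : ℤ) (f : Fin 3 → ℤ)
    (x01 x02 xpi xa xb : ℤ)
    (hx01 : x01 = c + 0 + 2 * f 0) (hx02 : x02 = x01)
    (hxa : xa = c + 1 + 2 * f 1) (hxb : xb = c + 2 + 2 * f 2)
    (τ : ℝ) (hτ : 0 < τ)
    (ε : Fin 5 → ℝ)
    (hε : ε = ![2 * Real.pi * (x01 : ℝ), 2 * Real.pi * (x02 : ℝ),
      -Real.pi + 2 * Real.pi * (xpi : ℝ),
      -(2 * Real.pi / 3) + 2 * Real.pi * (xa : ℝ),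
      -(4 * Real.pi / 3) + 2 * Real.pi * (xb : ℝ)])
    (U : ℝ → Matrix (Fin 5) (Fin 5) ℂ)
    (hU : ∀ t : ℝ, U t = ∑ i : Fin 5,
      Complex.exp (-(Complex.I * ((ε i : ℂ)) * (t : ℂ) / (τ : ℂ))) •
        Matrix.vecMulVec (y i) (star (y i))) :
    ‖dotProduct (star (e 2)) ((U (τ / 2)).mulVec (e 0))‖ = 1 ∧
    ‖dotProduct (star (e 4)) ((U τ).mulVec (e 0))‖ = 1 := by
  have hτ0 : (τ : ℂ) ≠ 0 := ofReal_ne_zero.2 hτ.ne'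
  subst hy hε hx01 hx02 hxa hxb hv00 hv10 hv1pi hv0a hv0b
  have h3 : ((√3 : ℝ) : ℂ)⁻¹ * ((√3 : ℝ) : ℂ)⁻¹ = 1 / 3 := by
    rw [← mul_inv, ← ofReal_mul, Real.mul_self_sqrt (by norm_num)]
    norm_num
  constructor
  · simp [he, hU, Pi.star_single, Matrix.vecMulVec_apply, Fin.sum_univ_five,
      transfer_amplitude_eq_neg_one_zpow α β hαβ c f 1 _ (τ / 2) τ (cexp (2 * π * I / 3))
        (cexp (4 * π * I / 3)) h3 (by push_cast; field_simp) (by congr 1; push_cast; ring)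
        (by congr 1; push_cast; ring)]
  · simp [he, hU, Pi.star_single, Matrix.vecMulVec_apply, Fin.sum_univ_five,
      transfer_amplitude_eq_neg_one_zpow α β hαβ c f 2 _ τ τ (cexp (4 * π * I / 3))
        (cexp (8 * π * I / 3)) h3 (by push_cast; field_simp) (by congr 1; push_cast; ring)
        (by congr 1; push_cast; ring)]

/-- In the five-node network with `P` having 3-cycle `{0,2,4}` and 2-cycle `{1,3}`, with
`|α| ∈ {0,1}` (so `x₀⁽¹⁾` may be taken equal to `x₀⁽²⁾`), the choice
`x_{2πν/3}⁽¹⁾ = c + ν + 2f(ν)` for `ν ∈ {0,1,2}` yields `|⟨2|U(τ/2)|0⟩| = 1`: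
the excitation is perfectly transferred from node `0` to node `2` at time `τ/2` (and to
node `4` at time `τ`). -/
theorem stmt_16
    (e : Fin 5 → (Fin 5 → ℂ)) (he : ∀ k, e k = Pi.single k 1)
    (α β : ℂ) (hαβ : ‖α‖ ^ 2 + ‖β‖ ^ 2 = 1)
    (hα : ‖α‖ = 0 ∨ ‖α‖ = 1)
    (v00 v10 v1pi v0a v0b : Fin 5 → ℂ)
    (hv00 : v00 = ((1 / Real.sqrt 3 : ℝ) : ℂ) • (e 0 + e 2 + e 4))
    (hv10 : v10 = ((1 / Real.sqrt 2 : ℝ) : ℂ) • (e 1 + e 3))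
    (hv1pi : v1pi = ((1 / Real.sqrt 2 : ℝ) : ℂ) • (e 1 - e 3))
    (hv0a : v0a = ((1 / Real.sqrt 3 : ℝ) : ℂ) •
      (e 0 + Complex.exp (2 * Real.pi * Complex.I / 3) • e 2 +
        Complex.exp (4 * Real.pi * Complex.I / 3) • e 4))
    (hv0b : v0b = ((1 / Real.sqrt 3 : ℝ) : ℂ) •
      (e 0 + Complex.exp (4 * Real.pi * Complex.I / 3) • e 2 +
        Complex.exp (8 * Real.pi * Complex.I / 3) • e 4))
    (y : Fin 5 → (Fin 5 → ℂ))
    (hy : y = ![α • v00 + β • v10, (starRingEnd ℂ β) • v00 - (starRingEnd ℂ α) • v10,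
      v1pi, v0a, v0b])
    (c : ℤ) (f : Fin 3 → ℤ)
    (x01 x02 xpi xa xb : ℤ)
    (hx01 : x01 = c + 0 + 2 * f 0) (hx02 : x02 = x01)
    (hxa : xa = c + 1 + 2 * f 1) (hxb : xb = c + 2 + 2 * f 2)
    (τ : ℝ) (hτ : 0 < τ)
    (ε : Fin 5 → ℝ)
    (hε : ε = ![2 * Real.pi * (x01 : ℝ), 2 * Real.pi * (x02 : ℝ),
      -Real.pi + 2 * Real.pi * (xpi : ℝ),
      -(2 * Real.pi / 3) + 2 * Real.pi * (xa : ℝ),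
      -(4 * Real.pi / 3) + 2 * Real.pi * (xb : ℝ)])
    (U : ℝ → Matrix (Fin 5) (Fin 5) ℂ)
    (hU : ∀ t : ℝ, U t = ∑ i : Fin 5,
      Complex.exp (-(Complex.I * ((ε i : ℂ)) * (t : ℂ) / (τ : ℂ))) •
        Matrix.vecMulVec (y i) (star (y i))) :
    ‖dotProduct (star (e 2)) ((U (τ / 2)).mulVec (e 0))‖ = 1 ∧
    ‖dotProduct (star (e 4)) ((U τ).mulVec (e 0))‖ = 1 :=
  stmt_16_general e he α β hαβ v00 v10 v1pi v0a v0b hv00 hv10 hv1pi hv0a hv0b y hy c f x01 x02 xpi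
    xa xb hx01 hx02 hxa hxb τ hτ ε hε U hU
end

section
/- Suppose a Hermitian operator H on ℂ^d satisfies exp(-iHτ) = Π for a permutation matrix Π, and H has the spectral form H = (1/τ) Σ_{λ,a} ε_λ^{(a)} |y_λ^{(a)}⟩⟨y_λ^{(a)}| where each |y_λ^{(a)}⟩ is a linear combination of cycle eigenvectors v_i^{(λ)} (each uniform in modulus over its cycle support Ω_i). Then the diagonal entries of H are constant on each cycle: ⟨k|H|k⟩ = ⟨k'|H|k'⟩ whenever k, k' belong to the same cycle support Ω_i. -/
/-! On a cycle support `Ω c` only the `c`-th cycle eigenvector is nonzero, so every `y_λ^{(a)}` has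
modulus `|β_{a,c}^{(λ)}| / √d_c` at each point of `Ω c`. The diagonal entry
`⟨k|H|k⟩ = τ⁻¹ Σ ε_λ^{(a)} |y_λ^{(a)}(k)|²` depends on `k` only through these moduli. -/

open Matrix

section CycleSupport

variable {α C M : Type*} [Fintype C] {Ω : C → Finset α}

theorem sum_apply_eq_of_mem_of_pairwise_disjoint [AddCommMonoid M]
    (hdisj : ∀ c c', c ≠ c' → Disjoint (Ω c) (Ω c')) {w : C → α → M}
    (hsupp : ∀ c, ∀ k ∉ Ω c, w c k = 0) {c : C} {k : α} (hk : k ∈ Ω c) :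
    (∑ c', w c') k = w c k := by
  rw [Finset.sum_apply, Fintype.sum_eq_single c]
  exact fun c' hc' => hsupp c' k fun hk' => Finset.disjoint_left.mp (hdisj c' c hc') hk' hk

theorem norm_sum_smul_apply_eq_of_mem (hdisj : ∀ c c', c ≠ c' → Disjoint (Ω c) (Ω c'))
    {v : C → α → ℂ} (hsupp : ∀ c, ∀ k ∉ Ω c, v c k = 0) {r : C → ℝ}
    (hmod : ∀ c, ∀ k ∈ Ω c, ‖v c k‖ = r c) (β : C → ℂ) {c : C} {k k' : α}
    (hk : k ∈ Ω c) (hk' : k' ∈ Ω c) :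
    ‖(∑ c', β c' • v c') k‖ = ‖(∑ c', β c' • v c') k'‖ := by
  have hsupp' : ∀ c, ∀ k ∉ Ω c, (β c • v c) k = 0 := fun c k hk => by
    rw [Pi.smul_apply, hsupp c k hk, smul_zero]
  rw [sum_apply_eq_of_mem_of_pairwise_disjoint hdisj hsupp' hk,
    sum_apply_eq_of_mem_of_pairwise_disjoint hdisj hsupp' hk', Pi.smul_apply, Pi.smul_apply,
    norm_smul, norm_smul, hmod c k hk, hmod c k' hk']

end CycleSupport

theorem Matrix.sum_smul_vecMulVec_star_apply_self {ι n : Type*} [Fintype ι] (a : ι → ℂ)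
    (y : ι → n → ℂ) (k : n) :
    (∑ i, a i • vecMulVec (y i) (star (y i))) k k = ∑ i, a i * (‖y i k‖ : ℂ) ^ 2 := by
  simp only [sum_apply, smul_apply, vecMulVec_apply, Pi.star_apply, smul_eq_mul]
  exact Finset.sum_congr rfl fun i _ => by rw [RCLike.star_def, Complex.mul_conj']

theorem stmt_17_general {d : ℕ} {C ι : Type*} [Fintype C] [Fintype ι]
    (Ω : C → Finset (Fin d))
    (hΩdisj : ∀ c c' : C, c ≠ c' → Disjoint (Ω c) (Ω c'))
    (dd : C → ℕ)
    (τ : ℝ)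
    (lam : ι → ℂ) (ε : ι → ℝ)
    (v : C → ℂ → (Fin d → ℂ))
    (hvmod : ∀ (c : C) (μ : ℂ), ∀ k ∈ Ω c, ‖v c μ k‖ = 1 / Real.sqrt (dd c))
    (hvsupp : ∀ (c : C) (μ : ℂ), ∀ k : Fin d, k ∉ Ω c → v c μ k = 0)
    (β : ι → C → ℂ) (y : ι → (Fin d → ℂ))
    (hy : ∀ i, y i = ∑ c : C, β i c • v c (lam i))
    (H : Matrix (Fin d) (Fin d) ℂ)
    (hH : H = (1 / (τ : ℂ)) • ∑ i : ι,
      ((ε i : ℝ) : ℂ) • Matrix.vecMulVec (y i) (star (y i))) :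
    ∀ c : C, ∀ k ∈ Ω c, ∀ k' ∈ Ω c, H k k = H k' k' := by
  intro c k hk k' hk'
  have hnorm : ∀ i, ‖y i k‖ = ‖y i k'‖ := fun i => by
    rw [hy i]
    exact norm_sum_smul_apply_eq_of_mem hΩdisj (fun c => hvsupp c (lam i))
      (fun c => hvmod c (lam i)) (β i) hk hk'
  rw [hH, Matrix.smul_apply, Matrix.smul_apply, sum_smul_vecMulVec_star_apply_self,
    sum_smul_vecMulVec_star_apply_self]
  simp only [hnorm]

/-- Suppose a Hermitian `H` on `ℂ^d` satisfies `exp(-iHτ) = P` for a permutation matrix `P`,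
and `H` has the spectral form `H = (1/τ) Σ_{λ,a} ε_λ^{(a)} |y_λ^{(a)}⟩⟨y_λ^{(a)}|` where each
`y_λ^{(a)} = Σ_i β_{a,i}^{(λ)} v_i^{(λ)}` is a linear combination of cycle eigenvectors
`v_i^{(λ)}` (each supported on its cycle support `Ω_i` with uniform modulus `1/√d_i` there).
Then the diagonal entries of `H` are constant on each cycle: `⟨k|H|k⟩ = ⟨k'|H|k'⟩` whenever
`k, k'` belong to the same cycle support `Ω_i`. -/
theorem stmt_17 {d : ℕ} {C ι : Type*} [Fintype C] [Fintype ι] [DecidableEq ι]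
    (π : Equiv.Perm (Fin d)) (P : Matrix (Fin d) (Fin d) ℂ)
    (hP : ∀ i j : Fin d, P i j = if i = π j then 1 else 0)
    (Ω : C → Finset (Fin d))
    (hΩdisj : ∀ c c' : C, c ≠ c' → Disjoint (Ω c) (Ω c'))
    (hΩinv : ∀ (c : C), ∀ k ∈ Ω c, π k ∈ Ω c)
    (dd : C → ℕ) (hdd : ∀ c, (Ω c).card = dd c) (hddpos : ∀ c, 0 < dd c)
    (τ : ℝ) (hτ : 0 < τ)
    (lam : ι → ℂ) (x : ι → ℤ) (ε : ι → ℝ)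
    (hε : ∀ i, ε i = -(lam i).arg + 2 * Real.pi * (x i : ℝ))
    (v : C → ℂ → (Fin d → ℂ))
    (hvmod : ∀ (c : C) (μ : ℂ), ∀ k ∈ Ω c, ‖v c μ k‖ = 1 / Real.sqrt (dd c))
    (hvsupp : ∀ (c : C) (μ : ℂ), ∀ k : Fin d, k ∉ Ω c → v c μ k = 0)
    (β : ι → C → ℂ) (y : ι → (Fin d → ℂ))
    (hy : ∀ i, y i = ∑ c : C, β i c • v c (lam i))
    (hyortho : ∀ i j, dotProduct (star (y i)) (y j) = if i = j then 1 else 0)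
    (H : Matrix (Fin d) (Fin d) ℂ) (hHherm : H.IsHermitian)
    (hH : H = (1 / (τ : ℂ)) • ∑ i : ι,
      ((ε i : ℝ) : ℂ) • Matrix.vecMulVec (y i) (star (y i)))
    (hexp : NormedSpace.exp ((-(Complex.I * (τ : ℂ))) • H) = P) :
    ∀ c : C, ∀ k ∈ Ω c, ∀ k' ∈ Ω c, H k k = H k' k' :=
  stmt_17_general Ω hΩdisj dd τ lam ε v hvmod hvsupp β y hy H hH
end
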